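/- arXiv:1302.6753 — 7 statements merged into one kernel-verified Lean document; each statement's English description precedes it below -/
import Mathlib

section
/- Let G be a topological group acting on a metric space (P,d), let K₁ ⊆ G be a compact symmetric subset (K₁ = K₁⁻¹) containing the identity, and set L := K₁K₁ \ interior(K₁). Let ε > 0, let B ⊆ P be a set of diameter at most ε, and let P₁ ⊆ B be a set such that d(k·x, x) ≥ 2ε for all x ∈ P₁ and k ∈ L. Then the relation S on P₁ defined by (x,y) ∈ S iff y = k·x for some k ∈ K₁ is an equivalence relation (reflexive, symmetric, and transitive). -/
open Set Pointwise

theorem mul_mem_interior_of_dist_smul_lt {G P : Type*} [Group G] [TopologicalSpace G]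
    [PseudoMetricSpace P] [MulAction G P] {K : Set G} {x : P} {δ : ℝ}
    (hL : ∀ g ∈ (K * K) \ interior K, δ ≤ dist (g • x) x) {k k' : G} (hk : k ∈ K) (hk' : k' ∈ K)
    (hlt : dist ((k' * k) • x) x < δ) : k' * k ∈ interior K := by
  by_contra hint
  exact (hL _ ⟨mul_mem_mul hk' hk, hint⟩).not_gt hlt

/- Transitivity: if `y = k • x` and `z = k' • y`, then `k' * k` moves `x` to `z ∈ B`, i.e. by at
most `ε < 2ε`, so `k' * k ∈ K₁K₁` avoids `L` and hence lies in `interior K₁ ⊆ K₁`. -/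
theorem stmt1_general {G P : Type*} [Group G] [TopologicalSpace G]
    [MetricSpace P] [MulAction G P]
    (K₁ : Set G) (hsym : K₁⁻¹ = K₁) (he : (1 : G) ∈ K₁)
    (ε : ℝ) (hε : 0 < ε)
    (B : Set P) (hB : ∀ a ∈ B, ∀ b ∈ B, dist a b ≤ ε)
    (P₁ : Set P) (hP₁ : P₁ ⊆ B)
    (hL : ∀ x ∈ P₁, ∀ k ∈ (K₁ * K₁) \ interior K₁, 2 * ε ≤ dist (k • x) x) :
    (∀ x ∈ P₁, ∃ k ∈ K₁, x = k • x) ∧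
    (∀ x ∈ P₁, ∀ y ∈ P₁, (∃ k ∈ K₁, y = k • x) → ∃ k ∈ K₁, x = k • y) ∧
    (∀ x ∈ P₁, ∀ y ∈ P₁, ∀ z ∈ P₁,
      (∃ k ∈ K₁, y = k • x) → (∃ k ∈ K₁, z = k • y) → ∃ k ∈ K₁, z = k • x) := by
  refine ⟨fun x _ => ⟨1, he, (one_smul G x).symm⟩, ?_, ?_⟩
  · rintro x - - - ⟨k, hk, rfl⟩
    exact ⟨k⁻¹, hsym ▸ inv_mem_inv.mpr hk, (inv_smul_smul k x).symm⟩
  · rintro x hx - - z hz ⟨k, hk, rfl⟩ ⟨k', hk', rfl⟩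
    have hdist : dist ((k' * k) • x) x < 2 * ε := by
      rw [mul_smul]
      linarith [hB _ (hP₁ hz) _ (hP₁ hx)]
    exact ⟨k' * k, interior_subset (mul_mem_interior_of_dist_smul_lt (hL x hx) hk hk' hdist),
      (mul_smul k' k x).symm⟩

/-- With `K₁` compact symmetric containing `e`, `L = K₁K₁ \ int(K₁)`,
`B` of diameter at most `ε`, and `P₁ ⊆ B` with `dist (k • x) x ≥ 2ε` for `x ∈ P₁`, `k ∈ L`,
the relation `(x, y) ∈ S ↔ ∃ k ∈ K₁, y = k • x` is an equivalence relation on `P₁`. -/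
theorem stmt1 {G P : Type*} [Group G] [TopologicalSpace G] [IsTopologicalGroup G]
    [MetricSpace P] [MulAction G P]
    (K₁ : Set G) (hK₁ : IsCompact K₁) (hsym : K₁⁻¹ = K₁) (he : (1 : G) ∈ K₁)
    (ε : ℝ) (hε : 0 < ε)
    (B : Set P) (hB : ∀ a ∈ B, ∀ b ∈ B, dist a b ≤ ε)
    (P₁ : Set P) (hP₁ : P₁ ⊆ B)
    (hL : ∀ x ∈ P₁, ∀ k ∈ (K₁ * K₁) \ interior K₁, 2 * ε ≤ dist (k • x) x) :
    (∀ x ∈ P₁, ∃ k ∈ K₁, x = k • x) ∧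
    (∀ x ∈ P₁, ∀ y ∈ P₁, (∃ k ∈ K₁, y = k • x) → ∃ k ∈ K₁, x = k • y) ∧
    (∀ x ∈ P₁, ∀ y ∈ P₁, ∀ z ∈ P₁,
      (∃ k ∈ K₁, y = k • x) → (∃ k ∈ K₁, z = k • y) → ∃ k ∈ K₁, z = k • x) :=
  stmt1_general K₁ hsym he ε hε B hB P₁ hP₁ hL
end

section
/- Let G be a group acting on a set X, let Y ⊆ X, let U ⊆ G be a subset such that the map U × Y → X, (g,y) ↦ g·y is injective, let C ⊆ G, and suppose there exist g₁,…,g_κ ∈ G with C ⊆ ⋃_{k=1}^κ U⁻¹g_k. Then for every y ∈ Y, the set Y ∩ (C·y) = {z ∈ Y : z = c·y for some c ∈ C} has at most κ elements. -/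
open Set Pointwise

/-- If `(g, y) ↦ g • y` is injective on `U × Y` and
`C ⊆ ⋃_{k=1}^κ U⁻¹ g_k`, then for every `y ∈ Y` the set `Y ∩ (C • y)` has at most `κ`
elements. -/
theorem stmt3 {G X : Type*} [Group G] [MulAction G X]
    (Y : Set X) (U : Set G)
    (hinj : Set.InjOn (fun p : G × X => p.1 • p.2) (U ×ˢ Y))
    (C : Set G) (κ : ℕ) (g : Fin κ → G)
    (hC : C ⊆ ⋃ k : Fin κ, U⁻¹ * {g k}) :
    ∀ y ∈ Y, {z | z ∈ Y ∧ ∃ c ∈ C, z = c • y}.Finite ∧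
      {z | z ∈ Y ∧ ∃ c ∈ C, z = c • y}.ncard ≤ κ := by
  intro y hy
  set S := {z | z ∈ Y ∧ ∃ c ∈ C, z = c • y} with hS
  have key : ∀ z ∈ S, ∃ k : Fin κ, ∃ u ∈ U, u • z = g k • y := by
    rintro z ⟨hzY, c, hcC, rfl⟩
    obtain ⟨k, hk⟩ := mem_iUnion.mp (hC hcC)
    obtain ⟨v, hv, w, hw, hvw⟩ := hk
    rw [mem_inv] at hv
    rw [mem_singleton_iff] at hw
    refine ⟨k, v⁻¹, hv, ?_⟩
    rw [smul_smul, ← hw, ← hvw, inv_mul_cancel_left]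
  classical
  rcases isEmpty_or_nonempty (Fin κ) with he | hn
  · have hSe : S = ∅ := eq_empty_iff_forall_notMem.mpr fun z hz =>
      (key z hz).elim fun k _ => he.elim k
    rw [hSe]
    simp
  choose! f u hu hfu using key
  have hinjS : Set.InjOn f S := by
    intro z₁ h₁ z₂ h₂ hf
    have e : (fun p : G × X => p.1 • p.2) (u z₁, z₁) = (fun p : G × X => p.1 • p.2) (u z₂, z₂) := by
      simp only
      rw [hfu z₁ h₁, hfu z₂ h₂, hf]
    have := hinj (mem_prod.mpr ⟨hu z₁ h₁, h₁.1⟩) (mem_prod.mpr ⟨hu z₂ h₂, h₂.1⟩) e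
    exact (Prod.ext_iff.mp this).2
  have hfin : S.Finite :=
    Set.Finite.of_finite_image (Set.toFinite (f '' S)) hinjS
  refine ⟨hfin, ?_⟩
  calc S.ncard = (f '' S).ncard := (Set.ncard_image_of_injOn hinjS).symm
    _ ≤ (Set.univ : Set (Fin κ)).ncard := Set.ncard_le_ncard (subset_univ _) finite_univ
    _ = κ := by simp [Set.ncard_univ]
end

section
/- Let G be a group acting freely on a set X. Let Y ⊆ X with K·Y = X for some subset K ⊆ G containing the identity, and let C ⊆ G be a symmetric generating set of G (C = C⁻¹ and every element of G is a finite product of elements of C). Set L := K⁻¹CK. Then for all y, z ∈ Y with z ∈ G·y there exist m ≥ 0 and points z₀ = y, z₁, …, z_m = z in Y and elements k₁, …, k_m ∈ L with z_i = k_i·z_{i-1} for all i. -/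
/-!
Write `g = c₁ ⋯ cₙ` as a word in `C` and follow the points `xⱼ = cⱼ ⋯ c₁ • y` along the word.
Since `K • Y = X`, each `xⱼ` is `kⱼ • yⱼ` for some `kⱼ ∈ K`, `yⱼ ∈ Y`, starting from `k₀ = 1`,
`y₀ = y`, and ending at `kₙ = 1`, `yₙ = z`. Consecutive points then satisfy
`yⱼ = (kⱼ⁻¹ cⱼ kⱼ₋₁) • yⱼ₋₁` with `kⱼ⁻¹ cⱼ kⱼ₋₁ ∈ K⁻¹CK`.
-/

open Set Relation

theorem Relation.ReflTransGen.exists_seq {α : Type*} {r : α → α → Prop} {a b : α}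
    (h : ReflTransGen r a b) :
    ∃ (m : ℕ) (w : ℕ → α), w 0 = a ∧ w m = b ∧ ∀ i < m, r (w i) (w (i + 1)) := by
  induction h with
  | refl => exact ⟨0, fun _ => a, rfl, rfl, fun i hi => absurd hi i.not_lt_zero⟩
  | @tail c d _ hcd ih =>
    obtain ⟨m, w, hw0, hwm, hw⟩ := ih
    refine ⟨m + 1, fun i => if i ≤ m then w i else d, by simp [hw0], by simp, fun i hi => ?_⟩
    rcases Nat.lt_succ_iff_lt_or_eq.1 hi with hi | rfl
    · simpa [hi.le, Nat.succ_le_of_lt hi] using hw i hi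
    · simpa [hwm] using hcd

namespace CrossSection

open scoped Pointwise

variable {G X : Type*} [Group G] [MulAction G X] {Y : Set X} {K C : Set G}

def Step (Y : Set X) (L : Set G) (a b : X) : Prop := b ∈ Y ∧ ∃ l ∈ L, b = l • a

theorem step_of_smul_eq {y y' : X} {k k' c : G} (hk : k ∈ K) (hk' : k' ∈ K) (hc : c ∈ C)
    (hy' : y' ∈ Y) (h : k' • y' = c • k • y) : Step Y (K⁻¹ * C * K) y y' := by
  refine ⟨hy', k'⁻¹ * c * k, mul_mem_mul (mul_mem_mul (inv_mem_inv.2 hk') hc) hk, ?_⟩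
  rw [mul_assoc, mul_smul, mul_smul, ← h, inv_smul_smul]

theorem exists_reachable_of_mem_closure (hK : (1 : G) ∈ K) (hKY : K • Y = univ) {g : G}
    (hg : g ∈ Submonoid.closure C) {y : X} (hy : y ∈ Y) :
    ∃ k ∈ K, ∃ y' ∈ Y, g • y = k • y' ∧ ReflTransGen (Step Y (K⁻¹ * C * K)) y y' := by
  induction hg using Submonoid.closure_induction_left with
  | one => exact ⟨1, hK, y, hy, by simp, .refl⟩
  | mul_left c hc g _ ih =>
    obtain ⟨k, hk, y', _, hgy, hreach⟩ := ih
    obtain ⟨k', hk', y'', hy'', hx⟩ := mem_smul.1 (hKY ▸ mem_univ (c • k • y'))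
    refine ⟨k', hk', y'', hy'', by rw [mul_smul, hgy, hx], hreach.tail ?_⟩
    exact step_of_smul_eq hk hk' hc hy'' hx

theorem reachable_of_mem_closure (hK : (1 : G) ∈ K) (hKY : K • Y = univ) {g : G}
    (hg : g ∈ Submonoid.closure C) {y : X} (hy : y ∈ Y) (hgy : g • y ∈ Y) :
    ReflTransGen (Step Y (K⁻¹ * C * K)) y (g • y) := by
  induction hg using Submonoid.closure_induction_left with
  | one => simpa using .refl
  | mul_left c hc g hg _ =>
    obtain ⟨k, hk, y', _, hg', hreach⟩ := exists_reachable_of_mem_closure hK hKY hg hy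
    exact hreach.tail <| step_of_smul_eq hk hK hc hgy (by rw [one_smul, mul_smul, hg'])

end CrossSection

open CrossSection in
theorem stmt4_general {G X : Type*} [Group G] [MulAction G X]
    (Y : Set X) (K : Set G) (hK : (1 : G) ∈ K)
    (hKY : {x : X | ∃ k ∈ K, ∃ y ∈ Y, x = k • y} = Set.univ)
    (C : Set G) (hCsym : C⁻¹ = C) (hCgen : Subgroup.closure C = ⊤) :
    ∀ y ∈ Y, ∀ z ∈ Y, (∃ g : G, z = g • y) →
      ∃ (m : ℕ) (w : ℕ → X), w 0 = y ∧ w m = z ∧ (∀ i ≤ m, w i ∈ Y) ∧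
        ∀ i < m, ∃ l ∈ {l : G | ∃ k ∈ K, ∃ k' ∈ K, ∃ c ∈ C, l = k⁻¹ * c * k'},
          w (i + 1) = l • w i := by
  rintro y hy _ hz ⟨g, rfl⟩
  open scoped Pointwise in
  have hKY' : K • Y = univ := eq_univ_of_forall fun x => by
    obtain ⟨k, hk, y, hy, rfl⟩ := hKY.symm ▸ mem_univ x
    exact smul_mem_smul hk hy
  have hg : g ∈ Submonoid.closure C := by
    have hg := hCgen ▸ Subgroup.mem_top g
    rwa [← Subgroup.mem_toSubmonoid, Subgroup.closure_toSubmonoid, hCsym, union_self] at hg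
  obtain ⟨m, w, hw0, hwm, hstep⟩ := (reachable_of_mem_closure hK hKY' hg hy hz).exists_seq
  refine ⟨m, w, hw0, hwm, fun i hi => ?_, fun i hi => ?_⟩
  · rcases i with _ | i
    · exact hw0 ▸ hy
    · exact (hstep i hi).1
  · obtain ⟨-, _, ⟨_, ⟨_, hk, c, hc, rfl⟩, k', hk', rfl⟩, hw⟩ := hstep i hi
    exact ⟨_, ⟨_, hk, k', hk', c, hc, by rw [inv_inv]⟩, hw⟩

/-- If `G` acts freely on `X`, `K • Y = X` with `1 ∈ K`, and `C` is a symmetric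
generating set of `G`, then with `L = K⁻¹CK` any two points of `Y` in the same `G`-orbit are
connected by a chain of points of `Y`, consecutive ones differing by elements of `L`. -/
theorem stmt4 {G X : Type*} [Group G] [MulAction G X]
    (hfree : ∀ (g : G) (x : X), g • x = x → g = 1)
    (Y : Set X) (K : Set G) (hK : (1 : G) ∈ K)
    (hKY : {x : X | ∃ k ∈ K, ∃ y ∈ Y, x = k • y} = Set.univ)
    (C : Set G) (hCsym : C⁻¹ = C) (hCgen : Subgroup.closure C = ⊤) :
    ∀ y ∈ Y, ∀ z ∈ Y, (∃ g : G, z = g • y) →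
      ∃ (m : ℕ) (w : ℕ → X), w 0 = y ∧ w m = z ∧ (∀ i ≤ m, w i ∈ Y) ∧
        ∀ i < m, ∃ l ∈ {l : G | ∃ k ∈ K, ∃ k' ∈ K, ∃ c ∈ C, l = k⁻¹ * c * k'},
          w (i + 1) = l • w i :=
  stmt4_general Y K hK hKY C hCsym hCgen
end

section
/- Let G be a locally compact group with left Haar measure λ, acting measure-preservingly on a probability space (X,μ). Suppose W ⊆ X is a measurable set with μ(W) > 0 and there is a compact set K ⊆ G such that for all g ∈ G, g·W ∩ W ≠ ∅ (up to null sets, i.e. μ(g·W ∩ W) > 0) implies g ∈ KK⁻¹. Then G is compact. -/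
/-!
Translates of `W` all have measure `μ W > 0` in a probability space, so a family of pairwise
a.e.-disjoint translates `h • W` has at most `1 / μ W` members; a maximal one, indexed by a finite
`F ⊆ G`, has every `g • W` meeting some `h • W` with `h ∈ F` in positive measure. By invariance
this says `μ ((h⁻¹ * g) • W ∩ W) > 0`, hence `h⁻¹ * g ∈ K * K⁻¹`, so `G = ⋃ h ∈ F, h • (K * K⁻¹)`
is compact.
-/

open Set Function Pointwise MeasureTheory
open scoped ENNReal

namespace MeasureTheory

variable {ι X : Type*} [MeasurableSpace X] {μ : Measure X}

theorem card_mul_le_measure_univ_of_pairwise_aedisjoint {s : ι → Set X} {F : Finset ι}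
    {ε : ℝ≥0∞} (hs : ∀ i ∈ F, NullMeasurableSet (s i) μ) (hε : ∀ i ∈ F, ε ≤ μ (s i))
    (hF : (F : Set ι).Pairwise (AEDisjoint μ on s)) :
    F.card * ε ≤ μ univ :=
  calc (F.card : ℝ≥0∞) * ε = ∑ _i ∈ F, ε := by rw [Finset.sum_const, nsmul_eq_mul]
    _ ≤ ∑ i ∈ F, μ (s i) := Finset.sum_le_sum hε
    _ = μ (⋃ i ∈ F, s i) := (measure_biUnion_finset₀ hF hs).symm
    _ ≤ μ univ := measure_mono (subset_univ _)

theorem exists_finset_forall_exists_measure_inter_pos [IsFiniteMeasure μ] {s : ι → Set X}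
    {ε : ℝ≥0∞} (hε0 : ε ≠ 0) (hs : ∀ i, NullMeasurableSet (s i) μ) (hε : ∀ i, ε ≤ μ (s i)) :
    ∃ F : Finset ι, ∀ i, ∃ j ∈ F, 0 < μ (s i ∩ s j) := by
  classical
  by_contra! hmax
  have hgrow : ∀ n : ℕ, ∃ F : Finset ι, (F : Set ι).Pairwise (AEDisjoint μ on s) ∧ F.card = n := by
    intro n
    induction n with
    | zero => exact ⟨∅, by simp⟩
    | succ n ih =>
      obtain ⟨F, hF, rfl⟩ := ih
      obtain ⟨i, hi⟩ := hmax F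
      have hdisj : ∀ j ∈ F, AEDisjoint μ (s i) (s j) := fun j hj => nonpos_iff_eq_zero.mp (hi j hj)
      have hiF : i ∉ F := fun hiF =>
        hε0 (le_zero_iff.mp ((hε i).trans_eq (by rw [← inter_self (s i)]; exact hdisj i hiF)))
      refine ⟨insert i F, ?_, Finset.card_insert_of_notMem hiF⟩
      rw [Finset.coe_insert]
      exact hF.insert fun j hj _ => ⟨hdisj j hj, (hdisj j hj).symm⟩
  obtain ⟨n, hn⟩ := ENNReal.exists_nat_mul_gt hε0 (measure_ne_top μ univ)
  obtain ⟨F, hF, rfl⟩ := hgrow n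
  exact hn.not_ge
    (card_mul_le_measure_univ_of_pairwise_aedisjoint (fun i _ => hs i) (fun i _ => hε i) hF)

theorem exists_finset_forall_exists_measure_inv_mul_smul_inter_pos {G : Type*} [Group G]
    [MulAction G X] [MeasurableConstSMul G X] [SMulInvariantMeasure G X μ] [IsFiniteMeasure μ]
    {W : Set X} (hW : NullMeasurableSet W μ) (hW0 : μ W ≠ 0) :
    ∃ F : Finset G, ∀ g, ∃ h ∈ F, 0 < μ ((h⁻¹ * g) • W ∩ W) := by
  obtain ⟨F, hF⟩ := exists_finset_forall_exists_measure_inter_pos (s := fun g : G => g • W) hW0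
    (fun g => hW.smul g) (fun g => (measure_smul μ g W).ge)
  refine ⟨F, fun g => ?_⟩
  obtain ⟨h, hh, hpos⟩ := hF g
  exact ⟨h, hh, by rwa [mul_smul, measure_inv_smul_inter]⟩

end MeasureTheory

theorem compactSpace_of_forall_exists_inv_mul_mem {G : Type*} [Group G] [TopologicalSpace G]
    [ContinuousMul G] (F : Finset G) {L : Set G} (hL : IsCompact L)
    (hcover : ∀ g, ∃ h ∈ F, h⁻¹ * g ∈ L) : CompactSpace G := by
  have huniv : (⋃ h ∈ F, h • L) = univ :=
    eq_univ_of_forall fun g => by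
      obtain ⟨h, hh, hg⟩ := hcover g
      exact mem_biUnion hh (mem_smul_set_iff_inv_smul_mem.mpr hg)
  exact ⟨huniv ▸ F.isCompact_biUnion fun h _ => hL.smul h⟩

theorem stmt5_general {G X : Type*} [Group G] [TopologicalSpace G] [IsTopologicalGroup G]
    [MeasurableSpace X] (μ : Measure X) [IsProbabilityMeasure μ] [MulAction G X]
    (hpmp : ∀ g : G, MeasurePreserving (fun x => g • x) μ μ)
    (W : Set X) (hW : MeasurableSet W) (hWpos : 0 < μ W)
    (K : Set G) (hK : IsCompact K)
    (hret : ∀ g : G, 0 < μ (g • W ∩ W) → g ∈ K * K⁻¹) :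
    CompactSpace G := by
  have : MeasurableConstSMul G X := ⟨fun g => (hpmp g).measurable⟩
  have : SMulInvariantMeasure G X μ :=
    ⟨fun g _ hs => (hpmp g).measure_preimage hs.nullMeasurableSet⟩
  obtain ⟨F, hF⟩ := exists_finset_forall_exists_measure_inv_mul_smul_inter_pos (G := G)
    hW.nullMeasurableSet hWpos.ne'
  exact compactSpace_of_forall_exists_inv_mul_mem F (hK.mul hK.inv) fun g =>
    (hF g).imp fun _ ⟨hh, hpos⟩ => ⟨hh, hret _ hpos⟩

/-- If a lc group `G` with Haar measure acts measure-preservingly on a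
probability space `(X, μ)` and there is `W` with `μ(W) > 0` and a compact `K ⊆ G` such that
`μ(g • W ∩ W) > 0` implies `g ∈ KK⁻¹`, then `G` is compact. -/
theorem stmt5 {G X : Type*} [Group G] [TopologicalSpace G] [IsTopologicalGroup G]
    [LocallyCompactSpace G] [SecondCountableTopology G]
    [MeasurableSpace G] [BorelSpace G] (lam : Measure G) [lam.IsHaarMeasure]
    [MeasurableSpace X] (μ : Measure X) [IsProbabilityMeasure μ] [MulAction G X]
    (hpmp : ∀ g : G, MeasurePreserving (fun x => g • x) μ μ)
    (W : Set X) (hW : MeasurableSet W) (hWpos : 0 < μ W)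
    (K : Set G) (hK : IsCompact K)
    (hret : ∀ g : G, 0 < μ (g • W ∩ W) → g ∈ K * K⁻¹) :
    CompactSpace G :=
  stmt5_general μ hpmp W hW hWpos K hK hret
end

section
/- Let G be a compact group with normalized Haar probability measure λ, and let V be a Banach space with a continuous linear action of G (the map G × V → V is continuous). Define Sₙ : C(Gⁿ, V) → C(G^{n−1}, V) for n ≥ 1 by (Sₙξ)(g₁,…,g_{n−1}) = ∫_G g·ξ(g⁻¹, g₁, …, g_{n−1}) dλ(g). Then, with the inhomogeneous bar coboundaries dₙ, one has Sₙ₊₁ ∘ dₙ + dₙ₋₁ ∘ Sₙ = id on C(Gⁿ,V) for all n ≥ 1. Consequently H^n(G,V) = 0 for all n ≥ 1. -/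
open MeasureTheory

private lemma contract_cons_zero {α : Type*} {n : ℕ} (op : α → α → α) (a : α)
    (g : Fin (n+1) → α) :
    Fin.contractNth 0 op (Fin.cons a g) = Fin.cons (op a (g 0)) (Fin.tail g) := by
  funext i
  induction i using Fin.cases with
  | zero =>
    rw [Fin.contractNth_apply_of_eq _ _ _ _ (by simp)]
    simp [Fin.contractNth_apply_of_eq, Fin.succ_zero_eq_one]
  | succ k =>
    rw [Fin.contractNth_apply_of_gt _ _ _ _ (by simp)]
    simp [Fin.contractNth_apply_of_gt, Fin.tail]

private lemma contract_cons_succ {α : Type*} {n : ℕ} (j : Fin (n+1)) (op : α → α → α) (a : α)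
    (g : Fin (n+1) → α) :
    Fin.contractNth j.succ op (Fin.cons a g) = Fin.cons a (Fin.contractNth j op g) := by
  funext i
  induction i using Fin.cases with
  | zero =>
    rw [Fin.contractNth_apply_of_lt _ _ _ _ (by simp)]
    simp [Fin.contractNth_apply_of_lt]
  | succ k =>
    rcases lt_trichotomy (k : ℕ) j with h | h | h
    · rw [Fin.contractNth_apply_of_lt _ _ _ _ (by simpa using h)]
      simp [Fin.contractNth_apply_of_lt _ _ _ _ h, ← Fin.succ_castSucc]
    · rw [Fin.contractNth_apply_of_eq _ _ _ _ (by simpa using h)]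
      simp [Fin.contractNth_apply_of_eq _ _ _ _ h, ← Fin.succ_castSucc]
    · rw [Fin.contractNth_apply_of_gt _ _ _ _ (by simpa using h)]
      simp [Fin.contractNth_apply_of_gt _ _ _ _ h]

set_option linter.unusedSectionVars false

section Aux

variable {G V : Type*} [Group G] [TopologicalSpace G] [IsTopologicalGroup G]
    [CompactSpace G] [MeasurableSpace G] [BorelSpace G]
    [NormedAddCommGroup V] [NormedSpace ℝ V] [CompleteSpace V]
    [DistribMulAction G V] [ContinuousSMul G V] [SMulCommClass G ℝ V]

/-- The action of a fixed `g : G` as a continuous linear map. -/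
private def actCLM (g : G) : V →L[ℝ] V :=
  { toFun := fun v => g • v
    map_add' := smul_add g
    map_smul' := fun r v => smul_comm g r v
    cont := continuous_const_smul g }

private lemma cont_cons {m : ℕ} {f : G → G} (hf : Continuous f) (c : Fin m → G) :
    Continuous (fun h => (Fin.cons (f h) c : Fin (m+1) → G)) := by
  apply continuous_pi
  intro i
  induction i using Fin.cases with
  | zero => simpa using hf
  | succ k => simpa using (continuous_const : Continuous fun _ : G => c k)

private lemma integ_aux (lam : Measure G) [lam.IsHaarMeasure] {φ : G → V} (hφ : Continuous φ) :
    Integrable (fun h => h • φ h) lam :=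
  (continuous_id.smul hφ).integrable_of_hasCompactSupport
    (HasCompactSupport.of_compactSpace _)

end Aux

/-- For a compact group `G` with Haar probability measure and a Banach space
`V` with continuous linear `G`-action, the averaging operators `Sₙ` give a contracting
homotopy `Sₙ₊₁ ∘ dₙ + dₙ₋₁ ∘ Sₙ = id` for the continuous bar complex in all degrees `n ≥ 1`;
consequently the continuous cohomology `H^n(G, V)` vanishes for all `n ≥ 1`. -/
theorem stmt14 {G V : Type*} [Group G] [TopologicalSpace G] [IsTopologicalGroup G]
    [CompactSpace G] [MeasurableSpace G] [BorelSpace G]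
    (lam : Measure G) [lam.IsHaarMeasure] [IsProbabilityMeasure lam]
    [NormedAddCommGroup V] [NormedSpace ℝ V] [CompleteSpace V]
    [DistribMulAction G V] [ContinuousSMul G V] [SMulCommClass G ℝ V]
    (d : ∀ n : ℕ, C(Fin n → G, V) → C(Fin (n + 1) → G, V))
    (hd : ∀ (n : ℕ) (ξ : C(Fin n → G, V)) (g : Fin (n + 1) → G),
      d n ξ g = g 0 • ξ (Fin.tail g)
        + ∑ j : Fin (n + 1), ((-1 : ℤ) ^ ((j : ℕ) + 1)) • ξ (Fin.contractNth j (· * ·) g))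
    (S : ∀ n : ℕ, C(Fin (n + 1) → G, V) → C(Fin n → G, V))
    (hS : ∀ (n : ℕ) (ξ : C(Fin (n + 1) → G, V)) (g : Fin n → G),
      S n ξ g = ∫ h : G, h • ξ (Fin.cons h⁻¹ g) ∂lam) :
    (∀ (n : ℕ) (ξ : C(Fin (n + 1) → G, V)), S (n + 1) (d (n + 1) ξ) + d n (S n ξ) = ξ) ∧
    (∀ (n : ℕ) (ξ : C(Fin (n + 1) → G, V)), d (n + 1) ξ = 0 →
      ∃ η : C(Fin n → G, V), d n η = ξ) := by
  have key : ∀ (n : ℕ) (ξ : C(Fin (n + 1) → G, V)), S (n + 1) (d (n + 1) ξ) + d n (S n ξ) = ξ := by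
    intro n ξ
    ext g
    -- notation
    set B : G → V := fun h => h • ξ (Fin.cons (h⁻¹ * g 0) (Fin.tail g)) with hB
    set F : Fin (n+1) → G → V :=
      fun i h => h • ξ (Fin.cons h⁻¹ (Fin.contractNth i (· * ·) g)) with hF
    have hBint : Integrable B lam :=
      integ_aux lam (ξ.continuous.comp (cont_cons ((continuous_inv.mul continuous_const)) _))
    have hFint : ∀ i, Integrable (F i) lam := fun i =>
      integ_aux lam (ξ.continuous.comp (cont_cons continuous_inv _))
    -- Step 1 : pointwise formula for the integrand of S (n+1) (d (n+1) ξ)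
    have step1 : ∀ h : G, h • (d (n+1) ξ) (Fin.cons h⁻¹ g)
        = ξ g + (-1 : ℝ) • B h + ∑ i : Fin (n+1), ((-1 : ℝ) ^ (i : ℕ)) • F i h := by
      intro h
      rw [hd]
      rw [Fin.sum_univ_succ]
      simp only [Fin.cons_zero, Fin.tail_cons, Fin.val_zero, pow_one, Fin.val_succ]
      rw [contract_cons_zero]
      have hc : ∀ i : Fin (n+1),
          Fin.contractNth i.succ (· * ·) (Fin.cons h⁻¹ g)
            = Fin.cons h⁻¹ (Fin.contractNth i (· * ·) g) := fun i =>
        contract_cons_succ i _ _ _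
      simp only [hc]
      -- replace integer smul by real smul
      have hz : ∀ (k : ℕ) (v : V), ((-1 : ℤ) ^ k) • v = ((-1 : ℝ) ^ k) • v := by
        intro k v
        rw [← Int.cast_smul_eq_zsmul ℝ ((-1 : ℤ) ^ k) v]
        push_cast
        ring_nf
      simp only [hz]
      rw [smul_add, smul_add, smul_inv_smul, Finset.smul_sum]
      have h1 : h • (((-1 : ℝ) ^ 1) • ξ (Fin.cons (h⁻¹ * g 0) (Fin.tail g)))
          = (-1 : ℝ) • B h := by
        rw [smul_comm]; simp [hB]
      have h2 : ∀ i : Fin (n+1),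
          h • (((-1 : ℝ) ^ ((i : ℕ) + 1 + 1)) • ξ (Fin.cons h⁻¹ (Fin.contractNth i (· * ·) g)))
            = ((-1 : ℝ) ^ (i : ℕ)) • F i h := by
        intro i
        rw [smul_comm]
        congr 1
        rw [pow_succ, pow_succ]
        ring
      rw [h1]
      rw [Finset.sum_congr rfl fun i _ => h2 i]
      abel
    -- Step 2 : integrate step1
    have i1 : Integrable (fun h : G => (-1 : ℝ) • B h) lam := by exact hBint.smul _
    have i2 : Integrable
        (fun h : G => ∑ i : Fin (n+1), ((-1 : ℝ) ^ (i : ℕ)) • F i h) lam := by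
      exact integrable_finset_sum _ fun i _ => (hFint i).smul _
    have i0 : Integrable (fun h : G => ξ g + (-1 : ℝ) • B h) lam := by
      exact (integrable_const _).add i1
    have step2 : S (n+1) (d (n+1) ξ) g
        = ξ g + (-1 : ℝ) • (∫ h, B h ∂lam)
          + ∑ i : Fin (n+1), ((-1 : ℝ) ^ (i : ℕ)) • (∫ h, F i h ∂lam) := by
      rw [hS]
      rw [integral_congr_ae (Filter.Eventually.of_forall step1)]
      rw [integral_add i0 i2,
        integral_add (integrable_const (ξ g)) i1,
        integral_finset_sum _ (fun i _ => by exact (hFint i).smul _)]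
      simp only [integral_smul, integral_const, measure_univ, ENNReal.toReal_one, one_smul, probReal_univ]
    -- Step 3 : the translation identity
    have step3 : g 0 • (S n ξ) (Fin.tail g) = ∫ h, B h ∂lam := by
      rw [hS]
      have hint : Integrable (fun h : G => h • ξ (Fin.cons h⁻¹ (Fin.tail g))) lam :=
        integ_aux lam (ξ.continuous.comp (cont_cons continuous_inv _))
      have e1 : g 0 • (∫ h, h • ξ (Fin.cons h⁻¹ (Fin.tail g)) ∂lam)
          = ∫ h, g 0 • (h • ξ (Fin.cons h⁻¹ (Fin.tail g))) ∂lam := by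
        exact ((actCLM (G := G) (V := V) (g 0)).integral_comp_comm hint).symm
      rw [e1]
      have e2 : ∀ h : G, g 0 • (h • ξ (Fin.cons h⁻¹ (Fin.tail g))) = B (g 0 * h) := by
        intro h
        rw [← mul_smul]
        simp [hB, mul_assoc]
      rw [integral_congr_ae (Filter.Eventually.of_forall e2)]
      exact integral_mul_left_eq_self B (g 0)
    -- Step 4 : formula for d n (S n ξ)
    have step4 : (d n (S n ξ)) g = (∫ h, B h ∂lam)
        + ∑ i : Fin (n+1), (-((-1 : ℝ) ^ (i : ℕ))) • (∫ h, F i h ∂lam) := by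
      rw [hd, step3]
      congr 1
      refine Finset.sum_congr rfl fun j _ => ?_
      rw [hS]
      rw [← Int.cast_smul_eq_zsmul ℝ]
      congr 1
      push_cast
      ring
    -- conclude
    simp only [ContinuousMap.add_apply]
    rw [step2, step4]
    have hsum : (∑ i : Fin (n+1), ((-1 : ℝ) ^ (i : ℕ)) • (∫ h, F i h ∂lam))
        + ∑ i : Fin (n+1), (-((-1 : ℝ) ^ (i : ℕ))) • (∫ h, F i h ∂lam) = 0 := by
      rw [← Finset.sum_add_distrib]
      simp [neg_smul]
    rw [neg_one_smul]
    abel_nf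
    abel_nf at hsum
    rw [hsum, add_zero]
  refine ⟨key, ?_⟩

  intro n ξ hzero
  refine ⟨S n ξ, ?_⟩
  have h0 : S (n+1) (d (n+1) ξ) = 0 := by
    ext g
    rw [hS, hzero]
    simp
  have := key n ξ
  rw [h0, zero_add] at this
  exact this
end

section
/- Let G be a locally compact second countable group acting essentially freely and measure-preservingly on a standard probability space (X,μ), and let Y ⊆ X be a cross section: there is a neighborhood U of e ∈ G such that (g,y) ↦ g·y is injective on U × Y, and μ(X \ G·Y) = 0. Then the relation ℛ := {(y,y′) ∈ Y × Y : y′ ∈ G·y} is a countable Borel equivalence relation on Y, i.e. ℛ is Borel, is an equivalence relation, and each equivalence class is countable. -/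
/-!
If `V ⊆ G` is so small that `V / V ⊆ U`, then for each `x` at most one `g ∈ V` moves `x` into
the cross section `Y`, by injectivity of the action on `U × Y`. Second countability covers `G`
by countably many such `V`, so every class of `ℛ` is countable, and `ℛ` is a countable union of
injective Borel images `(g, x) ↦ (x, g • x)` of Borel subsets of `G × X`, hence Borel by the
Lusin–Souslin theorem. That theorem needs `G` to be Polish: the same injectivity forces every
element inseparable from `1` to be `1`, so `G` is Hausdorff, and a locally compact second
countable Hausdorff group is Polish.
-/

open MeasureTheory Set Topology Uniformity

theorem IsTopologicalGroup.polishSpace {G : Type*} [Group G] [TopologicalSpace G]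
    [IsTopologicalGroup G] [T0Space G] [LocallyCompactSpace G] [SecondCountableTopology G] :
    PolishSpace G := by
  let := IsTopologicalGroup.rightUniformSpace G
  have : IsRightUniformGroup G := ⟨rfl⟩
  have := IsRightUniformGroup.completeSpace_of_weaklyLocallyCompactSpace (G := G)
  have : (𝓤 G).IsCountablyGenerated := Filter.comap.isCountablyGenerated _ _
  infer_instance

theorem exists_countable_cover_div_mem {G : Type*} [Group G] [TopologicalSpace G]
    [IsTopologicalGroup G] [SecondCountableTopology G] {U : Set G} (hU : U ∈ 𝓝 1) :
    ∃ 𝒱 : Set (Set G), 𝒱.Countable ∧ ⋃₀ 𝒱 = univ ∧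
      ∀ V ∈ 𝒱, IsOpen V ∧ ∀ a ∈ V, ∀ b ∈ V, a / b ∈ U := by
  obtain ⟨W, hW, hWU⟩ := exists_nhds_split_inv hU
  let T : G → Set G := fun d => (· / d) ⁻¹' interior W
  have hT_open : ∀ d, IsOpen (T d) := fun d =>
    isOpen_interior.preimage (continuous_div_right' d)
  have hT_mem : ∀ d, d ∈ T d := fun d => by
    simpa [T] using mem_interior_iff_mem_nhds.2 hW
  obtain ⟨D, hD, hD_cover⟩ := TopologicalSpace.countable_cover_nhds fun d =>
    (hT_open d).mem_nhds (hT_mem d)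
  refine ⟨T '' D, hD.image T, by rwa [sUnion_image], ?_⟩
  rintro _ ⟨d, -, rfl⟩
  refine ⟨hT_open d, fun a ha b hb => ?_⟩
  simpa [div_div_div_cancel_right] using
    hWU _ (interior_subset ha) _ (interior_subset hb)

section SMul

variable {G X : Type*} [Group G] [MulAction G X]

theorem Inseparable.smul_eq [TopologicalSpace G] [MeasurableSpace G] [BorelSpace G]
    [MeasurableSpace X] [MeasurableSingletonClass X] [MeasurableSMul G X] {g g' : G}
    (h : Inseparable g g') (x : X) : g • x = g' • x := by
  simpa using (h.mem_measurableSet_iff <|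
    (measurableSet_singleton (g' • x)).preimage (measurable_smul_const x)).2 (mem_singleton _)

theorem eq_of_div_mem_of_smul_mem {U : Set G} {Y : Set X}
    (hinj : InjOn (fun p : G × X => p.1 • p.2) (U ×ˢ Y)) (h1 : (1 : G) ∈ U)
    {g g' : G} {x : X} (hdiv : g' / g ∈ U) (hg : g • x ∈ Y) (hg' : g' • x ∈ Y) : g = g' := by
  have := hinj (mk_mem_prod hdiv hg) (mk_mem_prod h1 hg') (by simp [smul_smul])
  exact (div_eq_one.1 (congrArg Prod.fst this)).symm

theorem t0Space_of_injOn_smul [TopologicalSpace G] [IsTopologicalGroup G] [MeasurableSpace G]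
    [BorelSpace G] [MeasurableSpace X] [MeasurableSingletonClass X] [MeasurableSMul G X]
    {U : Set G} (hU : U ∈ 𝓝 1) {Y : Set X} {y : X} (hy : y ∈ Y)
    (hinj : InjOn (fun p : G × X => p.1 • p.2) (U ×ˢ Y)) : T0Space G := by
  refine (t0Space_iff_inseparable G).2 fun g g' hgg' => ?_
  have h_one : Inseparable (g / g') 1 := by
    simpa using hgg'.map (continuous_div_right' g')
  have hfix : (g / g') • y = y := by simpa using h_one.smul_eq y
  have := hinj (mk_mem_prod (mem_of_mem_nhds (h_one.nhds_eq ▸ hU)) hy)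
    (mk_mem_prod (mem_of_mem_nhds hU) hy) (by simpa using hfix)
  exact div_eq_one.1 (congrArg Prod.fst this)

def smulRel (Y : Set X) (V : Set G) : Set (X × X) :=
  {p | p.1 ∈ Y ∧ p.2 ∈ Y ∧ ∃ g ∈ V, p.2 = g • p.1}

theorem smulRel_sUnion (Y : Set X) (𝒱 : Set (Set G)) :
    smulRel Y (⋃₀ 𝒱) = ⋃ V ∈ 𝒱, smulRel Y V := by
  ext p
  simp only [smulRel, mem_sUnion, mem_ofPred_eq, mem_iUnion, exists_prop]
  grind

theorem smulRel_eq_image (Y : Set X) (V : Set G) :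
    smulRel Y V = (fun q : G × X => (q.2, q.1 • q.2)) ''
      {q | q.1 ∈ V ∧ q.2 ∈ Y ∧ q.1 • q.2 ∈ Y} := by
  ext ⟨x, z⟩
  simp only [smulRel, mem_ofPred_eq, mem_image, Prod.exists, Prod.mk.injEq]
  grind

theorem measurableSet_smulRel [MeasurableSpace G] [StandardBorelSpace G] [MeasurableSpace X]
    [StandardBorelSpace X] [MeasurableSMul₂ G X] {U : Set G} {Y : Set X}
    (hinj : InjOn (fun p : G × X => p.1 • p.2) (U ×ˢ Y)) (h1 : (1 : G) ∈ U) {V : Set G}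
    (hV : MeasurableSet V) (hY : MeasurableSet Y) (hVU : ∀ a ∈ V, ∀ b ∈ V, a / b ∈ U) :
    MeasurableSet (smulRel Y V) := by
  rw [smulRel_eq_image]
  refine MeasurableSet.image_of_measurable_injOn
    ((hV.preimage measurable_fst).inter ((hY.preimage measurable_snd).inter
      (hY.preimage (measurable_fst.smul measurable_snd))))
    (measurable_snd.prodMk (measurable_fst.smul measurable_snd)) ?_
  rintro ⟨g, x⟩ ⟨hg, -, hgx⟩ ⟨g', x'⟩ ⟨hg', -, hgx'⟩ h
  obtain ⟨rfl, -⟩ := Prod.mk.inj h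
  dsimp only at hg hgx hg' hgx'
  rw [eq_of_div_mem_of_smul_mem hinj h1 (hVU _ hg' _ hg) hgx hgx']

theorem subsingleton_smulRel_section {U : Set G} {Y : Set X}
    (hinj : InjOn (fun p : G × X => p.1 • p.2) (U ×ˢ Y)) (h1 : (1 : G) ∈ U) {V : Set G}
    (hVU : ∀ a ∈ V, ∀ b ∈ V, a / b ∈ U) (y : X) :
    (Prod.mk y ⁻¹' smulRel Y V).Subsingleton := by
  rintro z ⟨-, hz, g, hg, hzg⟩ z' ⟨-, hz', g', hg', hzg'⟩
  dsimp only at hz hz' hzg hzg'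
  subst hzg hzg'
  rw [eq_of_div_mem_of_smul_mem hinj h1 (hVU _ hg' _ hg) hz hz']

end SMul

theorem stmt15_general {G X : Type*} [Group G] [TopologicalSpace G] [IsTopologicalGroup G]
    [LocallyCompactSpace G] [SecondCountableTopology G] [MeasurableSpace G] [BorelSpace G]
    [MeasurableSpace X] [StandardBorelSpace X] [MulAction G X]
    (hact : Measurable (fun p : G × X => p.1 • p.2))
    (Y : Set X) (hY : MeasurableSet Y)
    (U : Set G) (hU : U ∈ nhds (1 : G))
    (hinj : Set.InjOn (fun p : G × X => p.1 • p.2) (U ×ˢ Y)) :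
    MeasurableSet {p : X × X | p.1 ∈ Y ∧ p.2 ∈ Y ∧ ∃ g : G, p.2 = g • p.1} ∧
    (∀ y ∈ Y, ∃ g : G, y = g • y) ∧
    (∀ y ∈ Y, ∀ z ∈ Y, (∃ g : G, z = g • y) → ∃ g : G, y = g • z) ∧
    (∀ y ∈ Y, ∀ z ∈ Y, ∀ w ∈ Y,
      (∃ g : G, z = g • y) → (∃ g : G, w = g • z) → ∃ g : G, w = g • y) ∧
    (∀ y ∈ Y, {z : X | z ∈ Y ∧ ∃ g : G, z = g • y}.Countable) := by
  have : MeasurableSMul₂ G X := ⟨hact⟩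
  have h1 : (1 : G) ∈ U := mem_of_mem_nhds hU
  obtain ⟨𝒱, h𝒱, h𝒱_cover, h𝒱_small⟩ := exists_countable_cover_div_mem hU
  have hrel : {p : X × X | p.1 ∈ Y ∧ p.2 ∈ Y ∧ ∃ g : G, p.2 = g • p.1} =
      ⋃ V ∈ 𝒱, smulRel Y V := by
    rw [← smulRel_sUnion, h𝒱_cover]
    simp [smulRel]
  refine ⟨?_, fun y _ => ⟨1, (one_smul G y).symm⟩, ?_, ?_, fun y hy => ?_⟩
  · rcases Y.eq_empty_or_nonempty with rfl | ⟨y, hy⟩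
    · simp
    have : T0Space G := t0Space_of_injOn_smul hU hy hinj
    have : PolishSpace G := IsTopologicalGroup.polishSpace
    rw [hrel]
    exact .biUnion h𝒱 fun V hV =>
      measurableSet_smulRel hinj h1 (h𝒱_small V hV).1.measurableSet hY (h𝒱_small V hV).2
  · rintro y - z - ⟨g, rfl⟩
    exact ⟨g⁻¹, (inv_smul_smul g y).symm⟩
  · rintro y - z - w - ⟨g, rfl⟩ ⟨g', rfl⟩
    exact ⟨g' * g, (mul_smul g' g y).symm⟩
  · have hclass : {z : X | z ∈ Y ∧ ∃ g : G, z = g • y} =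
        Prod.mk y ⁻¹' ⋃ V ∈ 𝒱, smulRel Y V := by
      rw [← hrel]
      simp [hy]
    rw [hclass, preimage_iUnion₂]
    exact h𝒱.biUnion fun V hV =>
      (subsingleton_smulRel_section hinj h1 (h𝒱_small V hV).2 y).countable

/-- For an essentially free pmp Borel action of a lcsc group `G` on a standard
probability space and a cross section `Y`, the relation
`ℛ = {(y, y') ∈ Y × Y : y' ∈ G • y}` is a countable Borel equivalence relation on `Y`. -/
theorem stmt15 {G X : Type*} [Group G] [TopologicalSpace G] [IsTopologicalGroup G]
    [LocallyCompactSpace G] [SecondCountableTopology G] [MeasurableSpace G] [BorelSpace G]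
    [MeasurableSpace X] [StandardBorelSpace X] [MulAction G X]
    (hact : Measurable (fun p : G × X => p.1 • p.2))
    (μ : Measure X) [IsProbabilityMeasure μ]
    (hpmp : ∀ g : G, MeasurePreserving (fun x => g • x) μ μ)
    (hfree : μ {x : X | ∃ g : G, g ≠ 1 ∧ g • x = x} = 0)
    (Y : Set X) (hY : MeasurableSet Y)
    (U : Set G) (hU : U ∈ nhds (1 : G))
    (hinj : Set.InjOn (fun p : G × X => p.1 • p.2) (U ×ˢ Y))
    (hcover : μ {x : X | ∀ g : G, g • x ∉ Y} = 0) :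
    MeasurableSet {p : X × X | p.1 ∈ Y ∧ p.2 ∈ Y ∧ ∃ g : G, p.2 = g • p.1} ∧
    (∀ y ∈ Y, ∃ g : G, y = g • y) ∧
    (∀ y ∈ Y, ∀ z ∈ Y, (∃ g : G, z = g • y) → ∃ g : G, y = g • z) ∧
    (∀ y ∈ Y, ∀ z ∈ Y, ∀ w ∈ Y,
      (∃ g : G, z = g • y) → (∃ g : G, w = g • z) → ∃ g : G, w = g • y) ∧
    (∀ y ∈ Y, {z : X | z ∈ Y ∧ ∃ g : G, z = g • y}.Countable) :=
  stmt15_general hact Y hY U hU hinj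
end

section
/- Let G be a locally compact second countable group, H ⊴ G a closed normal subgroup with quotient map π : G → G/H, and let H act on (X,μ) and G/H act on (X′,μ′). Consider the G-action on X″ = X × X′ given by g·(x,x′) = (g·x, π(g)·x′), where the first coordinate uses a G-action restricting to the given H-action. If U ⊆ H is a neighborhood of e in H with (h,y) ↦ h·y injective on U × Y for some Y ⊆ X, and U′ ⊆ G/H is a neighborhood of eH with (k,y′) ↦ k·y′ injective on U′ × Y′ for some Y′ ⊆ X′, then choosing a neighborhood U″ of e in G with π(U″) ⊆ U′ and H ∩ (U″)⁻¹U″ ⊆ U, the map U″ × (Y × Y′) → X″, (g,(y,y′)) ↦ g·(y,y′), is injective. -/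
open Set

/-! Comparing second coordinates, injectivity on `U' × Y'` forces `π g = π k` and `y' = z'`, so
`g⁻¹ k` lies in `H`; it lies in `U` by the choice of `U''`, and then `(g⁻¹ k) • z = y` together
with injectivity on `U × Y` forces `g⁻¹ k = 1` and `z = y`. -/

theorem Set.InjOn.eq_one_of_smul_eq {M α : Type*} [Monoid M] [MulAction M α] {U : Set M}
    {Y : Set α} (hinj : InjOn (fun p : M × α => p.1 • p.2) (U ×ˢ Y)) (h1 : 1 ∈ U) {m : M}
    (hm : m ∈ U) {y z : α} (hy : y ∈ Y) (hz : z ∈ Y) (h : m • z = y) : m = 1 ∧ z = y :=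
  Prod.ext_iff.mp <| hinj (mk_mem_prod hm hz) (mk_mem_prod h1 hy) (by simpa using h)

theorem stmt16_general {G X X' : Type*} [Group G] [TopologicalSpace G]
    (H : Subgroup G) [H.Normal] [MulAction G X] [MulAction (G ⧸ H) X']
    (Y : Set X) (Y' : Set X')
    (U : Set H) (hU : U ∈ nhds (1 : H))
    (hinj : Set.InjOn (fun p : H × X => p.1 • p.2) (U ×ˢ Y))
    (U' : Set (G ⧸ H))
    (hinj' : Set.InjOn (fun p : (G ⧸ H) × X' => p.1 • p.2) (U' ×ˢ Y'))
    (U'' : Set G)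
    (hπ : ∀ g ∈ U'', (QuotientGroup.mk g : G ⧸ H) ∈ U')
    (hsmall : ∀ g ∈ U'', ∀ k ∈ U'', ∀ h : H, (h : G) = g⁻¹ * k → h ∈ U) :
    Set.InjOn (fun p : G × (X × X') =>
        (p.1 • p.2.1, (QuotientGroup.mk p.1 : G ⧸ H) • p.2.2))
      (U'' ×ˢ (Y ×ˢ Y')) := by
  rintro ⟨g, y, y'⟩ ⟨hg, hy, hy'⟩ ⟨k, z, z'⟩ ⟨hk, hz, hz'⟩ heq
  obtain ⟨hX, hX'⟩ := Prod.mk.inj heq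
  obtain ⟨hgk, rfl⟩ : (g : G ⧸ H) = k ∧ y' = z' :=
    Prod.ext_iff.mp <| hinj' (mk_mem_prod (hπ g hg) hy') (mk_mem_prod (hπ k hk) hz') hX'
  let h : H := ⟨g⁻¹ * k, QuotientGroup.eq.mp hgk⟩
  have hzy : h • z = y := by
    rw [Subgroup.smul_def, mul_smul, ← hX, inv_smul_smul]
  obtain ⟨h_eq_one, rfl⟩ :=
    hinj.eq_one_of_smul_eq (mem_of_mem_nhds hU) (hsmall g hg k hk h rfl) hy hz hzy
  have : g⁻¹ * k = 1 := congrArg Subtype.val h_eq_one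
  rw [inv_mul_eq_one.mp this]

/-- injectivity of the action map on `U'' × (Y × Y')` for the product of an
`H`-cross-section and a `G/H`-cross-section (key step for cross sections of induced
actions). -/
theorem stmt16 {G X X' : Type*} [Group G] [TopologicalSpace G] [IsTopologicalGroup G]
    (H : Subgroup G) [H.Normal] [MulAction G X] [MulAction (G ⧸ H) X']
    (Y : Set X) (Y' : Set X')
    (U : Set H) (hU : U ∈ nhds (1 : H))
    (hinj : Set.InjOn (fun p : H × X => p.1 • p.2) (U ×ˢ Y))
    (U' : Set (G ⧸ H)) (hU' : U' ∈ nhds (1 : G ⧸ H))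
    (hinj' : Set.InjOn (fun p : (G ⧸ H) × X' => p.1 • p.2) (U' ×ˢ Y'))
    (U'' : Set G) (hU'' : U'' ∈ nhds (1 : G))
    (hπ : ∀ g ∈ U'', (QuotientGroup.mk g : G ⧸ H) ∈ U')
    (hsmall : ∀ g ∈ U'', ∀ k ∈ U'', ∀ h : H, (h : G) = g⁻¹ * k → h ∈ U) :
    Set.InjOn (fun p : G × (X × X') =>
        (p.1 • p.2.1, (QuotientGroup.mk p.1 : G ⧸ H) • p.2.2))
      (U'' ×ˢ (Y ×ˢ Y')) :=
  stmt16_general H Y Y' U hU hinj U' hinj' U'' hπ hsmall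
end
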